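/- arXiv:2410.21454 — 5 statements merged into one kernel-verified Lean document; each statement's English description precedes it below -/
import Mathlib

section
/- Let P be a poset equipped with an order-reversing involution p ↦ p' (i.e. p ≤ q implies q' ≤ p', and p'' = p). Assume saturation (for all p, q ∈ P, there exists r with r ≤ p and r ≤ q, or there exists r with r ≤ p and r ≤ q') and splitting (for every p ∈ P there exist r, s ≤ p with r ≤ s'). Then P is connected: for any p, q ∈ P there is a zig-zag from p to q, i.e. a finite sequence z₁, y₁, z₂, y₂, …, zₙ, yₙ, z₍ₙ₊₁₎ in P with z₁ = p, z₍ₙ₊₁₎ = q, and z_j ≤ y_j and z₍ⱼ₊₁₎ ≤ y_j for all j. -/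
/-!
Split `q` into `s, t ≤ q` with `s ≤ t'` and apply saturation to `p` and `t`. Either some `u ≤ p`
lies below `t ≤ q`, giving the zig-zag `p ≥ u ≤ q`, or some `u ≤ p` lies below `t'`, giving
`p ≥ u ≤ t' ≥ s ≤ q`.
-/

open Relation

theorem Relation.ReflTransGen.exists_fin_chain {α : Type*} {r : α → α → Prop} {a b : α}
    (h : ReflTransGen r a b) :
    ∃ (n : ℕ) (z : Fin (n + 1) → α), z 0 = a ∧ z (Fin.last n) = b ∧
      ∀ j : Fin n, r (z j.castSucc) (z j.succ) := by
  induction h using ReflTransGen.head_induction_on with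
  | refl => exact ⟨0, fun _ => b, rfl, rfl, Fin.elim0⟩
  | head hac _ ih =>
    obtain ⟨n, z, hz0, hzb, hz⟩ := ih
    refine ⟨n + 1, Fin.cons _ z, rfl, by simpa [← Fin.succ_last] using hzb, ?_⟩
    intro j
    cases j using Fin.cases with
    | zero => simpa [hz0] using hac
    | succ k => simpa [← Fin.succ_castSucc] using hz k

section ZigZag

variable {P : Type*} [Preorder P] {a b : P}

theorem reflTransGen_join_le_of_le (h : a ≤ b) : ReflTransGen (Join (· ≤ ·)) a b :=
  .single ⟨b, h, le_rfl⟩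

theorem reflTransGen_join_le_of_ge (h : b ≤ a) : ReflTransGen (Join (· ≤ ·)) a b :=
  .single ⟨a, le_rfl, h⟩

end ZigZag

theorem poset_connected_of_saturation_splitting_general
    {P : Type*} [PartialOrder P] (i : P → P)
    (hsat : ∀ p q : P, (∃ r, r ≤ p ∧ r ≤ q) ∨ (∃ r, r ≤ p ∧ r ≤ i q))
    (hsplit : ∀ p : P, ∃ r s, r ≤ p ∧ s ≤ p ∧ r ≤ i s) :
    ∀ p q : P, ∃ (n : ℕ) (z : Fin (n + 1) → P) (y : Fin n → P),
      z 0 = p ∧ z (Fin.last n) = q ∧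
      ∀ j : Fin n, z j.castSucc ≤ y j ∧ z j.succ ≤ y j := by
  intro p q
  obtain ⟨s, t, hsq, htq, hst⟩ := hsplit q
  have hpq : ReflTransGen (Join (· ≤ ·)) p q := by
    rcases hsat p t with ⟨u, hup, hut⟩ | ⟨u, hup, hut⟩
    · exact (reflTransGen_join_le_of_ge hup).trans (reflTransGen_join_le_of_le (hut.trans htq))
    · exact ((reflTransGen_join_le_of_ge hup).tail ⟨i t, hut, hst⟩).trans
        (reflTransGen_join_le_of_le hsq)
  obtain ⟨n, z, hz0, hzq, hz⟩ := hpq.exists_fin_chain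
  choose y hy using hz
  exact ⟨n, z, y, hz0, hzq, hy⟩

/-- Connectivity of a poset with order-reversing involution satisfying
saturation and splitting: any two elements are joined by a zig-zag. -/
theorem poset_connected_of_saturation_splitting
    {P : Type*} [PartialOrder P] (i : P → P)
    (hanti : ∀ p q : P, p ≤ q → i q ≤ i p) (hinv : ∀ p : P, i (i p) = p)
    (hsat : ∀ p q : P, (∃ r, r ≤ p ∧ r ≤ q) ∨ (∃ r, r ≤ p ∧ r ≤ i q))
    (hsplit : ∀ p : P, ∃ r s, r ≤ p ∧ s ≤ p ∧ r ≤ i s) :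
    ∀ p q : P, ∃ (n : ℕ) (z : Fin (n + 1) → P) (y : Fin n → P),
      z 0 = p ∧ z (Fin.last n) = q ∧
      ∀ j : Fin n, z j.castSucc ≤ y j ∧ z j.succ ≤ y j :=
  poset_connected_of_saturation_splitting_general i hsat hsplit
end

section
/- Let P be a poset with an order-reversing involution. Then the conjunction of saturation (for all p, q: p ⊓̂ q ≠ ∅ or p ⊓̂ q' ≠ ∅, where p ⊓̂ q denotes the set of common lower bounds of p and q) and splitting (every p admits r, s ≤ p with r ≤ s') is equivalent to the small-indicator axiom: for any p, q ∈ P there exists p̃ ≤ p which is a q-small q-indicator. -/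
/-- Saturation together with splitting is equivalent to the small-indicator
axiom: for all `p q` there is a `q`-small `q`-indicator `p̃ ≤ p`. -/
theorem saturation_and_splitting_iff_small_indicators
    {P : Type*} [PartialOrder P] (i : P → P)
    (hanti : ∀ p q : P, p ≤ q → i q ≤ i p) (hinv : ∀ p : P, i (i p) = p) :
    ((∀ p q : P, (∃ r, r ≤ p ∧ r ≤ q) ∨ (∃ r, r ≤ p ∧ r ≤ i q)) ∧
      (∀ p : P, ∃ r s, r ≤ p ∧ s ≤ p ∧ r ≤ i s))
    ↔ (∀ p q : P, ∃ pt : P, pt ≤ p ∧ (pt ≤ q ∨ pt ≤ i q) ∧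
        ∃ r s : P, pt ≤ r ∧ q ≤ r ∧ pt ≤ s ∧ i q ≤ s) := by
  constructor
  · rintro ⟨sat, split⟩ p q
    rcases sat p q with ⟨p₁, hp₁p, hp₁q⟩ | ⟨p₁, hp₁p, hp₁q⟩
    · obtain ⟨r, s, hr, hs, hrs⟩ := split p₁
      exact ⟨r, hr.trans hp₁p, Or.inl (hr.trans hp₁q),
        q, i s, hr.trans hp₁q, le_refl q, hrs,
        hanti _ _ (hs.trans hp₁q)⟩
    · obtain ⟨r, s, hr, hs, hrs⟩ := split p₁
      refine ⟨r, hr.trans hp₁p, Or.inr (hr.trans hp₁q),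
        i s, i q, ?_, ?_, hr.trans hp₁q, le_refl _⟩
      · exact hrs
      · have := hanti _ _ (hs.trans hp₁q)
        rwa [hinv] at this
  · intro h
    constructor
    · intro p q
      obtain ⟨pt, hptp, hind, _⟩ := h p q
      rcases hind with h1 | h1
      · exact Or.inl ⟨pt, hptp, h1⟩
      · exact Or.inr ⟨pt, hptp, h1⟩
    · intro p
      obtain ⟨pt, hptp, _, r, s, _, _, hpts, hips⟩ := h p p
      refine ⟨i s, pt, ?_, hptp, hanti _ _ hpts⟩
      have := hanti _ _ hips
      rwa [hinv] at this
end

section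
/- Let P be a poset with an order-reversing involution satisfying saturation (for all x, c ∈ P, either x and c have a common lower bound or x and c' have a common lower bound). Suppose a, b, c ≤ p and (a = z₁, y₁, …, yₙ, z₍ₙ₊₁₎ = b) is a zig-zag contained in p such that for every j, y_j and c have no common lower bound. Then there exists c̃ ≤ c such that the entire zig-zag is contained in c̃', i.e. y_j ≤ c̃' and z_j ≤ c̃' for all j. -/
/-- If a zig-zag from `a` to `b` contained in `p` avoids `c` (no `y_j` has a
common lower bound with `c`), then there is `c̃ ≤ c` such that the whole
zig-zag is contained in `c̃'`. -/
theorem zigzag_avoiding_into_complement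
    {P : Type*} [PartialOrder P] (i : P → P)
    (hanti : ∀ p q : P, p ≤ q → i q ≤ i p) (hinv : ∀ p : P, i (i p) = p)
    (hsat : ∀ x y : P, (∃ r, r ≤ x ∧ r ≤ y) ∨ (∃ r, r ≤ x ∧ r ≤ i y))
    (p a b c : P) (ha : a ≤ p) (hb : b ≤ p) (hc : c ≤ p)
    (n : ℕ) (hn : 0 < n) (z : Fin (n + 1) → P) (y : Fin n → P)
    (hz0 : z 0 = a) (hzl : z (Fin.last n) = b)
    (hzy : ∀ j : Fin n, z j.castSucc ≤ y j ∧ z j.succ ≤ y j)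
    (hyp : ∀ j : Fin n, y j ≤ p) (hzp : ∀ j : Fin (n + 1), z j ≤ p)
    (havoid : ∀ j : Fin n, ¬ ∃ r : P, r ≤ y j ∧ r ≤ c) :
    ∃ ct : P, ct ≤ c ∧ (∀ j : Fin n, y j ≤ i ct) ∧
      ∀ j : Fin (n + 1), z j ≤ i ct := by
  -- Build a descending chain: d ≤ c with d ≤ i (y j) for all j < m.
  have key : ∀ m : ℕ, m ≤ n → ∃ d : P, d ≤ c ∧
      ∀ j : Fin n, (j : ℕ) < m → d ≤ i (y j) := by
    intro m
    induction m with
    | zero => exact fun _ => ⟨c, le_refl c, fun j hj => absurd hj (Nat.not_lt_zero _)⟩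
    | succ m ih =>
      intro hm
      obtain ⟨d, hdc, hdy⟩ := ih (Nat.le_of_succ_le hm)
      have hmn : m < n := hm
      rcases hsat d (y ⟨m, hmn⟩) with ⟨r, hrd, hry⟩ | ⟨r, hrd, hry⟩
      · exact absurd ⟨r, hry, le_trans hrd hdc⟩ (havoid ⟨m, hmn⟩)
      · refine ⟨r, le_trans hrd hdc, fun j hj => ?_⟩
        rcases Nat.lt_succ_iff_lt_or_eq.mp hj with h | h
        · exact le_trans hrd (hdy j h)
        · have : j = ⟨m, hmn⟩ := Fin.ext h
          rw [this]; exact hry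
  obtain ⟨ct, hctc, hcty⟩ := key n le_rfl
  have hy : ∀ j : Fin n, y j ≤ i ct := by
    intro j
    have := hanti _ _ (hcty j j.isLt)
    rwa [hinv] at this
  refine ⟨ct, hctc, hy, fun j => ?_⟩
  induction j using Fin.lastCases with
  | last =>
    have hn' : n - 1 < n := Nat.sub_lt hn one_pos
    have hlast : Fin.last n = (⟨n - 1, hn'⟩ : Fin n).succ := by
      ext; simp; omega
    rw [hlast]
    exact le_trans (hzy ⟨n - 1, hn'⟩).2 (hy _)
  | cast k => exact le_trans (hzy k).1 (hy k)
end

section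
/- Let P be a poset with an order-reversing involution satisfying the geometric axioms GA0–GA3 (disjoint complements, saturation, splitting, and the zig-zag axiom). Then any two splittings (r₁, s₁) and (r₂, s₂) of an element p (i.e. r_i, s_i ≤ p with r_i ≤ s_i') are related by a mutually disjoint zig-zag contained in p: there is a mutually disjoint zig-zag (r₁, s₁) ⇝ (r₂, s₂) or (r₁, s₁) ⇝ (s₂, r₂). -/
/-- An element `x` is `q`-small. -/
def QSmall {P : Type*} [PartialOrder P] (i : P → P) (q x : P) : Prop :=
  ∃ r s : P, x ≤ r ∧ q ≤ r ∧ x ≤ s ∧ i q ≤ s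

/-- An element `x` is a `q`-indicator. -/
def QInd {P : Type*} [PartialOrder P] (i : P → P) (q x : P) : Prop :=
  x ≤ q ∨ x ≤ i q

/-- A mutually disjoint zig-zag from `(r₁, s₁)` to `(r₂, s₂)` contained in `p`. -/
def MDZZ {P : Type*} [PartialOrder P] (i : P → P) (p r₁ s₁ r₂ s₂ : P) : Prop :=
  ∃ (n : ℕ) (x z : Fin (n + 1) → P) (w y : Fin n → P),
    x 0 = r₁ ∧ x (Fin.last n) = r₂ ∧ z 0 = s₁ ∧ z (Fin.last n) = s₂ ∧
    (∀ j : Fin n, x j.castSucc ≤ w j ∧ x j.succ ≤ w j) ∧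
    (∀ j : Fin n, z j.castSucc ≤ y j ∧ z j.succ ≤ y j) ∧
    (∀ j : Fin n, w j ≤ i (z j.castSucc)) ∧
    (∀ j : Fin n, y j ≤ i (x j.succ)) ∧
    (∀ j, x j ≤ p) ∧ (∀ j, z j ≤ p) ∧ (∀ j, w j ≤ p) ∧ (∀ j, y j ≤ p)

namespace MDZZAux

variable {P : Type*} [PartialOrder P]

/-- An elementary move on pairs: either the first component moves (inside a bound
`w ≤ p` disjoint from the second component), or the second component moves (inside a
bound `y ≤ p` disjoint from the first component). -/
def Mv (i : P → P) (p : P) (s t : P × P) : Prop :=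
  (t.2 = s.2 ∧ s.2 ≤ p ∧ ∃ w, s.1 ≤ w ∧ t.1 ≤ w ∧ w ≤ p ∧ w ≤ i s.2) ∨
  (t.1 = s.1 ∧ s.1 ≤ p ∧ ∃ y, s.2 ≤ y ∧ t.2 ≤ y ∧ y ≤ p ∧ y ≤ i s.1)

lemma mv_swap {i : P → P} {p : P} {s t : P × P} (h : Mv i p s t) :
    Mv i p (s.2, s.1) (t.2, t.1) := by
  rcases h with ⟨h1, h2, w, hw1, hw2, hw3, hw4⟩ | ⟨h1, h2, y, hy1, hy2, hy3, hy4⟩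
  · exact Or.inr ⟨h1, h2, w, hw1, hw2, hw3, hw4⟩
  · exact Or.inl ⟨h1, h2, y, hy1, hy2, hy3, hy4⟩

lemma rch_swap {i : P → P} {p : P} {s t : P × P}
    (h : Relation.ReflTransGen (Mv i p) s t) :
    Relation.ReflTransGen (Mv i p) (s.2, s.1) (t.2, t.1) := by
  induction h with
  | refl => exact Relation.ReflTransGen.refl
  | tail _ h₂ ih => exact ih.tail (mv_swap h₂)

lemma mdzz_refl (i : P → P) (p a b : P) (ha : a ≤ p) (hb : b ≤ p) :
    MDZZ i p a b a b :=
  ⟨0, fun _ => a, fun _ => b, Fin.elim0, Fin.elim0, rfl, rfl, rfl, rfl,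
    fun j => j.elim0, fun j => j.elim0, fun j => j.elim0, fun j => j.elim0,
    fun _ => ha, fun _ => hb, fun j => j.elim0, fun j => j.elim0⟩

lemma mdzz_cons {i : P → P} {p a b c d e f w₀ y₀ : P}
    (haw : a ≤ w₀) (hcw : c ≤ w₀) (hwp : w₀ ≤ p) (hwib : w₀ ≤ i b)
    (hby : b ≤ y₀) (hdy : d ≤ y₀) (hyP : y₀ ≤ p) (hyic : y₀ ≤ i c)
    (h : MDZZ i p c d e f) : MDZZ i p a b e f := by
  obtain ⟨n, x, z, w, y, hx0, hxl, hz0, hzl, hxw, hzy, hwz, hyx, hxp, hzp, hwp', hyp'⟩ := h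
  refine ⟨n + 1, Fin.cons a x, Fin.cons b z, Fin.cons w₀ w, Fin.cons y₀ y,
    ?_, ?_, ?_, ?_, ?_, ?_, ?_, ?_, ?_, ?_, ?_, ?_⟩
  · simp
  · rw [← Fin.succ_last, Fin.cons_succ]; exact hxl
  · simp
  · rw [← Fin.succ_last, Fin.cons_succ]; exact hzl
  · intro j
    induction j using Fin.cases with
    | zero =>
      refine ⟨?_, ?_⟩
      · simpa using haw
      · rw [show ((0 : Fin (n+1)).succ) = (Fin.succ 0) from rfl, Fin.cons_succ, hx0]
        simpa using hcw
    | succ k =>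
      refine ⟨?_, ?_⟩
      · rw [← Fin.succ_castSucc, Fin.cons_succ, Fin.cons_succ]
        exact (hxw k).1
      · rw [Fin.cons_succ, Fin.cons_succ]
        exact (hxw k).2
  · intro j
    induction j using Fin.cases with
    | zero =>
      refine ⟨?_, ?_⟩
      · simpa using hby
      · rw [show ((0 : Fin (n+1)).succ) = (Fin.succ 0) from rfl, Fin.cons_succ, hz0]
        simpa using hdy
    | succ k =>
      refine ⟨?_, ?_⟩
      · rw [← Fin.succ_castSucc, Fin.cons_succ, Fin.cons_succ]
        exact (hzy k).1
      · rw [Fin.cons_succ, Fin.cons_succ]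
        exact (hzy k).2
  · intro j
    induction j using Fin.cases with
    | zero => simpa using hwib
    | succ k =>
      rw [Fin.cons_succ, ← Fin.succ_castSucc, Fin.cons_succ]
      exact hwz k
  · intro j
    induction j using Fin.cases with
    | zero =>
      rw [show ((0 : Fin (n+1)).succ) = (Fin.succ 0) from rfl, Fin.cons_succ, Fin.cons_zero, hx0]
      exact hyic
    | succ k =>
      rw [Fin.cons_succ, Fin.cons_succ]
      exact hyx k
  · intro j
    induction j using Fin.cases with
    | zero => simpa using haw.trans hwp
    | succ k => rw [Fin.cons_succ]; exact hxp k
  · intro j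
    induction j using Fin.cases with
    | zero => simpa using hby.trans hyP
    | succ k => rw [Fin.cons_succ]; exact hzp k
  · intro j
    induction j using Fin.cases with
    | zero => simpa using hwp
    | succ k => rw [Fin.cons_succ]; exact hwp' k
  · intro j
    induction j using Fin.cases with
    | zero => simpa using hyP
    | succ k => rw [Fin.cons_succ]; exact hyp' k

lemma mv_mdzz_cons {i : P → P} {p : P}
    (hanti : ∀ a b : P, a ≤ b → i b ≤ i a) (hinv : ∀ a : P, i (i a) = a)
    {s t : P × P} {e f : P}
    (hm : Mv i p s t) (h : MDZZ i p t.1 t.2 e f) : MDZZ i p s.1 s.2 e f := by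
  have flip : ∀ {x z : P}, x ≤ i z → z ≤ i x := fun {x z} hxz => by
    have h2 := hanti x (i z) hxz
    rwa [hinv] at h2
  obtain ⟨a, b⟩ := s
  obtain ⟨c, d⟩ := t
  rcases hm with ⟨h1, h2, w, hw1, hw2, hw3, hw4⟩ | ⟨h1, h2, y, hy1, hy2, hy3, hy4⟩
  · have h1' : d = b := h1
    subst h1'
    exact mdzz_cons hw1 hw2 hw3 hw4 le_rfl le_rfl h2 (flip (hw2.trans hw4)) h
  · have h1' : c = a := h1
    subst h1'
    exact mdzz_cons le_rfl le_rfl h2 (flip (hy1.trans hy4)) hy1 hy2 hy3 hy4 h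

lemma rch_mdzz {i : P → P} {p : P}
    (hanti : ∀ a b : P, a ≤ b → i b ≤ i a) (hinv : ∀ a : P, i (i a) = a)
    {c d : P} (hc : c ≤ p) (hd : d ≤ p) :
    ∀ s : P × P, Relation.ReflTransGen (Mv i p) s (c, d) → MDZZ i p s.1 s.2 c d := by
  intro s h
  induction h using Relation.ReflTransGen.head_induction_on with
  | refl => exact mdzz_refl i p c d hc hd
  | head h' _ ih => exact mv_mdzz_cons hanti hinv h' ih

/-- The key walking lemma: given a `q`-decorated zig-zag (ℕ-indexed) from `v 0` to
`v N`, both disjoint from `q`, and a companion `g ≤ q`, the pair `(v 0, g)` reaches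
`(v N, e)` or `(e, v N)` for some `e ≤ q`. -/
lemma walk (i : P → P) (p : P)
    (hanti : ∀ a b : P, a ≤ b → i b ≤ i a) (hinv : ∀ a : P, i (i a) = a)
    (GA1 : ∀ a b : P, (∃ r, r ≤ a ∧ r ≤ b) ∨ (∃ r, r ≤ a ∧ r ≤ i b))
    (q : P) (hq : q ≤ p) :
    ∀ N : ℕ, ∀ v Y : ℕ → P,
      (∀ j, j ≤ N → v j ≤ p) → (∀ j, j < N → Y j ≤ p) →
      (∀ j, j < N → v j ≤ Y j) → (∀ j, j < N → v (j + 1) ≤ Y j) →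
      (∀ j, j ≤ N → v j ≤ q ∨ v j ≤ i q) →
      (∀ j, j < N → ∃ π, π ≤ q ∧ π ≤ i (Y j)) →
      v 0 ≤ i q → v N ≤ i q → ∀ g, g ≤ q →
      ∃ e, e ≤ q ∧ (Relation.ReflTransGen (Mv i p) (v 0, g) (v N, e) ∨
        Relation.ReflTransGen (Mv i p) (v 0, g) (e, v N)) := by
  classical
  have flip : ∀ {x z : P}, x ≤ i z → z ≤ i x := fun {x z} hxz => by
    have h2 := hanti x (i z) hxz
    rwa [hinv] at h2
  intro N
  induction N using Nat.strong_induction_on with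
  | _ N IH =>
    intro v Y hvp hYp hvy1 hvy2 hind hpark h0 hN g hg
    rcases N with _ | N'
    · exact ⟨g, hg, Or.inl Relation.ReflTransGen.refl⟩
    by_cases h1 : v 1 ≤ i q
    · -- next node is also outside q : a clean step
      obtain ⟨π₀, hπq, hπy⟩ := hpark 0 (by omega)
      have hst1 : Mv i p (v 0, g) (v 0, π₀) :=
        Or.inr ⟨rfl, hvp 0 (by omega), q, hg, hπq, hq, flip h0⟩
      have hst2 : Mv i p (v 0, π₀) (v 1, π₀) :=
        Or.inl ⟨rfl, hπq.trans hq, Y 0, hvy1 0 (by omega), hvy2 0 (by omega),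
          hYp 0 (by omega), flip hπy⟩
      obtain ⟨e, he, hor⟩ := IH N' (by omega) (fun j => v (j + 1)) (fun j => Y (j + 1))
        (fun j hj => hvp (j + 1) (by omega)) (fun j hj => hYp (j + 1) (by omega))
        (fun j hj => hvy1 (j + 1) (by omega)) (fun j hj => hvy2 (j + 1) (by omega))
        (fun j hj => hind (j + 1) (by omega)) (fun j hj => hpark (j + 1) (by omega))
        h1 hN π₀ hπq
      have pre : Relation.ReflTransGen (Mv i p) (v 0, g) (v 1, π₀) :=
        (Relation.ReflTransGen.single hst1).tail hst2
      exact ⟨e, he, hor.imp (fun h => pre.trans h) (fun h => pre.trans h)⟩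
    · -- the zig-zag makes an excursion into q
      have hv1 : v 1 ≤ q := (hind 1 (by omega)).resolve_right h1
      have hex : ∃ k, v (k + 1) ≤ i q := ⟨N', hN⟩
      have hmOut : v (Nat.find hex + 1) ≤ i q := Nat.find_spec hex
      set m' := Nat.find hex with hm'def
      have hm'le : m' ≤ N' := Nat.find_le hN
      have hm'1 : 1 ≤ m' := by
        by_contra hcon
        have hz : m' = 0 := by omega
        rw [hz] at hmOut
        exact h1 hmOut
      have hIn : ∀ j, 1 ≤ j → j ≤ m' → v j ≤ q := by
        intro j hj1 hjm
        rcases hind j (by omega) with h | h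
        · exact h
        · exfalso
          have hmin := Nat.find_min hex (m := j - 1) (by omega)
          rw [show j - 1 + 1 = j from by omega] at hmin
          exact hmin h
      obtain ⟨πm, hπmq, hπmy⟩ := hpark m' (by omega)
      obtain ⟨π₀, hπ0q, hπ0y⟩ := hpark 0 (by omega)
      have hv0p : v 0 ≤ p := hvp 0 (by omega)
      have hvm'q : v m' ≤ q := hIn m' hm'1 le_rfl
      have hvmp : v (m' + 1) ≤ p := hvp (m' + 1) (by omega)
      have hq_iv0 : q ≤ i (v 0) := flip h0
      have s1 : Mv i p (v 0, g) (v 0, v m') :=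
        Or.inr ⟨rfl, hv0p, q, hg, hvm'q, hq, hq_iv0⟩
      -- the remaining walk after the excursion
      have suffix : ∀ g', g' ≤ q → ∃ e, e ≤ q ∧
          (Relation.ReflTransGen (Mv i p) (v (m' + 1), g') (v (N' + 1), e) ∨
           Relation.ReflTransGen (Mv i p) (v (m' + 1), g') (e, v (N' + 1))) := by
        intro g' hg'
        have harith : m' + 1 + (N' + 1 - (m' + 1)) = N' + 1 := by omega
        obtain ⟨e, he, hor⟩ := IH (N' + 1 - (m' + 1)) (by omega)
          (fun j => v (m' + 1 + j)) (fun j => Y (m' + 1 + j))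
          (fun j hj => hvp (m' + 1 + j) (by omega))
          (fun j hj => hYp (m' + 1 + j) (by omega))
          (fun j hj => hvy1 (m' + 1 + j) (by omega))
          (fun j hj => hvy2 (m' + 1 + j) (by omega))
          (fun j hj => hind (m' + 1 + j) (by omega))
          (fun j hj => hpark (m' + 1 + j) (by omega))
          hmOut (show v (m' + 1 + (N' + 1 - (m' + 1))) ≤ i q by rw [harith]; exact hN) g' hg'
        refine ⟨e, he, ?_⟩
        simp only [harith] at hor
        exact hor
      rcases GA1 (v 0) (Y m') with ⟨c, hc0, hcy⟩ | ⟨c, hc0, hcy⟩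
      · -- the entry node meets the exit bound: cross directly
        have hcp : c ≤ p := hc0.trans hv0p
        have hciq : c ≤ i q := hc0.trans h0
        have hv0ivm : v 0 ≤ i (v m') := flip (hvm'q.trans hq_iv0)
        have s2 : Mv i p (v 0, v m') (c, v m') :=
          Or.inl ⟨rfl, hvm'q.trans hq, v 0, le_rfl, hc0, hv0p, hv0ivm⟩
        have s3 : Mv i p (c, v m') (c, πm) :=
          Or.inr ⟨rfl, hcp, q, hvm'q, hπmq, hq, flip hciq⟩
        have s4 : Mv i p (c, πm) (v (m' + 1), πm) :=
          Or.inl ⟨rfl, hπmq.trans hq, Y m', hcy, hvy2 m' (by omega),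
            hYp m' (by omega), flip hπmy⟩
        obtain ⟨e, he, hor⟩ := suffix πm hπmq
        have pre : Relation.ReflTransGen (Mv i p) (v 0, g) (v (m' + 1), πm) :=
          (((Relation.ReflTransGen.single s1).tail s2).tail s3).tail s4
        exact ⟨e, he, hor.imp (fun h => pre.trans h) (fun h => pre.trans h)⟩
      · -- the entry node is disjoint from the exit bound
        have hcp : c ≤ p := hc0.trans hv0p
        have hciq : c ≤ i q := hc0.trans h0
        have hym_ic : Y m' ≤ i c := flip hcy
        have hv0ivm : v 0 ≤ i (v m') := flip (hvm'q.trans hq_iv0)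
        have s2 : Mv i p (v 0, v m') (c, v m') :=
          Or.inl ⟨rfl, hvm'q.trans hq, v 0, le_rfl, hc0, hv0p, hv0ivm⟩
        have s3 : Mv i p (c, v m') (c, v (m' + 1)) :=
          Or.inr ⟨rfl, hcp, Y m', hvy1 m' (by omega), hvy2 m' (by omega),
            hYp m' (by omega), hym_ic⟩
        have hvm_ic : v (m' + 1) ≤ i c := (hvy2 m' (by omega)).trans hym_ic
        rcases GA1 (v (m' + 1)) (Y 0) with ⟨μ, hμm, hμy⟩ | ⟨ν, hνm, hνy⟩
        · -- restore the companion inside q via the entry bound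
          have s4 : Mv i p (c, v (m' + 1)) (c, v m') :=
            Or.inr ⟨rfl, hcp, Y m', hvy2 m' (by omega), hvy1 m' (by omega),
              hYp m' (by omega), hym_ic⟩
          have s5 : Mv i p (c, v m') (c, π₀) :=
            Or.inr ⟨rfl, hcp, q, hvm'q, hπ0q, hq, flip hciq⟩
          have s6 : Mv i p (c, π₀) (μ, π₀) :=
            Or.inl ⟨rfl, hπ0q.trans hq, Y 0, hc0.trans (hvy1 0 (by omega)), hμy,
              hYp 0 (by omega), flip hπ0y⟩
          have s7 : Mv i p (μ, π₀) (v (m' + 1), π₀) :=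
            Or.inl ⟨rfl, hπ0q.trans hq, v (m' + 1), hμm, le_rfl, hvmp,
              flip (hπ0q.trans (flip hmOut))⟩
          obtain ⟨e, he, hor⟩ := suffix π₀ hπ0q
          have pre : Relation.ReflTransGen (Mv i p) (v 0, g) (v (m' + 1), π₀) :=
            ((((((Relation.ReflTransGen.single s1).tail s2).tail s3).tail s4).tail
              s5).tail s6).tail s7
          exact ⟨e, he, hor.imp (fun h => pre.trans h) (fun h => pre.trans h)⟩
        · -- slot swap: the companion rides into the excursion entry node
          have hνp : ν ≤ p := hνm.trans hvmp
          have s4 : Mv i p (c, v (m' + 1)) (c, ν) :=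
            Or.inr ⟨rfl, hcp, v (m' + 1), le_rfl, hνm, hvmp, hvm_ic⟩
          have s5 : Mv i p (c, ν) (v 1, ν) :=
            Or.inl ⟨rfl, hνp, Y 0, hc0.trans (hvy1 0 (by omega)), hvy2 0 (by omega),
              hYp 0 (by omega), flip hνy⟩
          have s6 : Mv i p (v 1, ν) (v 1, v (m' + 1)) :=
            Or.inr ⟨rfl, hvp 1 (by omega), v (m' + 1), hνm, le_rfl, hvmp,
              flip (hv1.trans (flip hmOut))⟩
          obtain ⟨e, he, hor⟩ := suffix (v 1) hv1
          have hor' :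
              Relation.ReflTransGen (Mv i p) (v 1, v (m' + 1)) (e, v (N' + 1)) ∨
              Relation.ReflTransGen (Mv i p) (v 1, v (m' + 1)) (v (N' + 1), e) :=
            hor.imp (fun h => rch_swap h) (fun h => rch_swap h)
          have pre : Relation.ReflTransGen (Mv i p) (v 0, g) (v 1, v (m' + 1)) :=
            (((((Relation.ReflTransGen.single s1).tail s2).tail s3).tail s4).tail
              s5).tail s6
          refine ⟨e, he, ?_⟩
          rcases hor' with h | h
          · exact Or.inr (pre.trans h)
          · exact Or.inl (pre.trans h)

/-- Run a full walk: obtain a zig-zag from GA3 and traverse it. -/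
lemma runWalk (i : P → P)
    (hanti : ∀ a b : P, a ≤ b → i b ≤ i a) (hinv : ∀ a : P, i (i a) = a)
    (GA1 : ∀ a b : P, (∃ r, r ≤ a ∧ r ≤ b) ∨ (∃ r, r ≤ a ∧ r ≤ i b))
    (GA3 : ∀ p q pt ph : P, pt ≤ p → QSmall i q pt → QInd i q pt →
      ph ≤ p → QSmall i q ph → QInd i q ph →
      ∃ (n : ℕ) (z : Fin (n + 1) → P) (y : Fin n → P),
        z 0 = pt ∧ z (Fin.last n) = ph ∧
        (∀ j : Fin n, z j.castSucc ≤ y j ∧ z j.succ ≤ y j) ∧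
        (∀ j : Fin (n + 1), z j ≤ p) ∧ (∀ j : Fin n, y j ≤ p) ∧
        (∀ j : Fin (n + 1), QInd i q (z j)) ∧ (∀ j : Fin n, QSmall i q (y j)))
    (p q : P) (hq : q ≤ p) (A B : P) (hA : A ≤ p) (hB : B ≤ p)
    (hAq : A ≤ i q) (hBq : B ≤ i q) (g : P) (hg : g ≤ q) :
    ∃ e, e ≤ q ∧ (Relation.ReflTransGen (Mv i p) (A, g) (B, e) ∨
      Relation.ReflTransGen (Mv i p) (A, g) (e, B)) := by
  obtain ⟨n, z, y, hz0, hzn, hzy, hzp, hyp, hindF, hsmF⟩ :=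
    GA3 p q A B hA ⟨p, i q, hA, hq, hAq, le_rfl⟩ (Or.inr hAq)
      hB ⟨p, i q, hB, hq, hBq, le_rfl⟩ (Or.inr hBq)
  set v : ℕ → P := fun j => z ⟨min j n, by
    have := Nat.min_le_right j n; omega⟩ with hvdef
  set Y : ℕ → P := fun j => if h : j < n then y ⟨j, h⟩ else p with hYdef
  have hveq : ∀ j (hj : j ≤ n), v j = z ⟨j, by omega⟩ := by
    intro j hj
    simp only [hvdef]
    congr 1
    exact Fin.ext (by simpa using Nat.min_eq_left hj)
  have hYeq : ∀ j (hj : j < n), Y j = y ⟨j, hj⟩ := by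
    intro j hj
    simp only [hYdef, dif_pos hj]
  have hv0 : v 0 = A := by
    rw [hveq 0 (by omega), ← hz0]; rfl
  have hvn : v n = B := by
    rw [hveq n le_rfl, ← hzn]; rfl
  obtain ⟨e, he, hor⟩ := walk i p hanti hinv GA1 q hq n v Y
    (fun j hj => by rw [hveq j hj]; exact hzp _)
    (fun j hj => by rw [hYeq j hj]; exact hyp _)
    (fun j hj => by
      rw [hveq j (le_of_lt hj), hYeq j hj]
      have := (hzy ⟨j, hj⟩).1
      rwa [show (⟨j, hj⟩ : Fin n).castSucc = ⟨j, by omega⟩ from rfl] at this)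
    (fun j hj => by
      rw [hveq (j + 1) (by omega), hYeq j hj]
      have := (hzy ⟨j, hj⟩).2
      rwa [show (⟨j, hj⟩ : Fin n).succ = ⟨j + 1, by omega⟩ from rfl] at this)
    (fun j hj => by
      rw [hveq j hj]
      exact hindF _)
    (fun j hj => by
      rw [hYeq j hj]
      obtain ⟨r, s, h1, h2, h3, h4⟩ := hsmF ⟨j, hj⟩
      refine ⟨i s, ?_, hanti _ _ h3⟩
      have h5 := hanti _ _ h4
      rwa [hinv] at h5)
    (by rw [hv0]; exact hAq) (by rw [hvn]; exact hBq) g hg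
  rw [hv0, hvn] at hor
  exact ⟨e, he, hor⟩

end MDZZAux

/-- Given GA0–GA3, any two splittings of `p` are related by a mutually
disjoint zig-zag contained in `p`, possibly after swapping the second pair. -/
theorem mutually_disjoint_zigzags_exist
    {P : Type*} [PartialOrder P] (i : P → P)
    (hanti : ∀ p q : P, p ≤ q → i q ≤ i p) (hinv : ∀ p : P, i (i p) = p)
    (GA0 : ∀ p : P, ¬ ∃ r : P, r ≤ p ∧ r ≤ i p)
    (GA1 : ∀ p q : P, (∃ r, r ≤ p ∧ r ≤ q) ∨ (∃ r, r ≤ p ∧ r ≤ i q))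
    (GA2 : ∀ p : P, ∃ r s, r ≤ p ∧ s ≤ p ∧ r ≤ i s)
    (GA3 : ∀ p q pt ph : P, pt ≤ p → QSmall i q pt → QInd i q pt →
      ph ≤ p → QSmall i q ph → QInd i q ph →
      ∃ (n : ℕ) (z : Fin (n + 1) → P) (y : Fin n → P),
        z 0 = pt ∧ z (Fin.last n) = ph ∧
        (∀ j : Fin n, z j.castSucc ≤ y j ∧ z j.succ ≤ y j) ∧
        (∀ j : Fin (n + 1), z j ≤ p) ∧ (∀ j : Fin n, y j ≤ p) ∧
        (∀ j : Fin (n + 1), QInd i q (z j)) ∧ (∀ j : Fin n, QSmall i q (y j)))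
    (p r₁ s₁ r₂ s₂ : P)
    (hr₁ : r₁ ≤ p) (hs₁ : s₁ ≤ p) (h₁ : r₁ ≤ i s₁)
    (hr₂ : r₂ ≤ p) (hs₂ : s₂ ≤ p) (h₂ : r₂ ≤ i s₂) :
    MDZZ i p r₁ s₁ r₂ s₂ ∨ MDZZ i p r₁ s₁ s₂ r₂ := by
  classical
  open MDZZAux in
  have flip : ∀ {x z : P}, x ≤ i z → z ≤ i x := fun {x z} hxz => by
    have h2 := hanti x (i z) hxz
    rwa [hinv] at h2
  have hs₂ir₂ : s₂ ≤ i r₂ := flip h₂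
  -- a single walk followed by growing the companion
  have main1 : ∀ t T G : P, t ≤ s₁ → t ≤ G → T ≤ p → G ≤ p → T ≤ i G → T ≤ i t →
      (Relation.ReflTransGen (Mv i p) (r₁, s₁) (T, G) ∨
       Relation.ReflTransGen (Mv i p) (r₁, s₁) (G, T)) := by
    intro t T G hts₁ htG hTp hGp hTiG hTit
    have htp : t ≤ p := hts₁.trans hs₁
    have hr₁it : r₁ ≤ i t := h₁.trans (hanti _ _ hts₁)
    obtain ⟨e, he, hor⟩ := runWalk i hanti hinv GA1 GA3 p t htp r₁ T hr₁ hTp hr₁it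
      hTit t le_rfl
    have pre : Mv i p (r₁, s₁) (r₁, t) :=
      Or.inr ⟨rfl, hr₁, s₁, le_rfl, hts₁, hs₁, flip h₁⟩
    rcases hor with h | h
    · have post : Mv i p (T, e) (T, G) :=
        Or.inr ⟨rfl, hTp, G, he.trans htG, le_rfl, hGp, flip hTiG⟩
      exact Or.inl (((Relation.ReflTransGen.single pre).trans h).tail post)
    · have post : Mv i p (e, T) (G, T) :=
        Or.inl ⟨rfl, hTp, G, he.trans htG, le_rfl, hGp, flip hTiG⟩
      exact Or.inr (((Relation.ReflTransGen.single pre).trans h).tail post)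
  rcases GA1 s₁ s₂ with ⟨t, ht1, ht2⟩ | ⟨t, ht1, ht2⟩
  · -- s₁ and s₂ have a common lower bound
    rcases main1 t r₂ s₂ ht1 ht2 hr₂ hs₂ h₂ (h₂.trans (hanti _ _ ht2)) with h | h
    · exact Or.inl (rch_mdzz hanti hinv hr₂ hs₂ _ h)
    · exact Or.inr (rch_mdzz hanti hinv hs₂ hr₂ _ h)
  · rcases GA1 s₁ r₂ with ⟨t', ht'1, ht'2⟩ | ⟨t', ht'1, ht'2⟩
    · -- s₁ and r₂ have a common lower bound
      rcases main1 t' s₂ r₂ ht'1 ht'2 hs₂ hr₂ hs₂ir₂ (hs₂ir₂.trans (hanti _ _ ht'2))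
        with h | h
      · exact Or.inr (rch_mdzz hanti hinv hs₂ hr₂ _ h)
      · exact Or.inl (rch_mdzz hanti hinv hr₂ hs₂ _ h)
    · rcases GA1 t r₂ with ⟨u, hu1, hu2⟩ | ⟨u, hu1, hu2⟩
      · -- a piece of s₁ inside r₂
        rcases main1 u s₂ r₂ (hu1.trans ht1) hu2 hs₂ hr₂ hs₂ir₂
          (hs₂ir₂.trans (hanti _ _ hu2)) with h | h
        · exact Or.inr (rch_mdzz hanti hinv hs₂ hr₂ _ h)
        · exact Or.inl (rch_mdzz hanti hinv hr₂ hs₂ _ h)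
      · -- a piece of s₁ disjoint from both r₂ and s₂ : two walks
        have hus₁ : u ≤ s₁ := hu1.trans ht1
        have hup : u ≤ p := hus₁.trans hs₁
        have hr₁iu : r₁ ≤ i u := h₁.trans (hanti _ _ hus₁)
        have hr₂iu : r₂ ≤ i u := flip hu2
        obtain ⟨e, he, hor1⟩ := runWalk i hanti hinv GA1 GA3 p u hup r₁ r₂ hr₁ hr₂
          hr₁iu hr₂iu u le_rfl
        have pre : Mv i p (r₁, s₁) (r₁, u) :=
          Or.inr ⟨rfl, hr₁, s₁, le_rfl, hus₁, hs₁, flip h₁⟩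
        have heir₂ : e ≤ i r₂ := he.trans hu2
        have hep : e ≤ p := he.trans hup
        obtain ⟨e₂, he₂, hor2⟩ := runWalk i hanti hinv GA1 GA3 p r₂ hr₂ e s₂ hep hs₂
          heir₂ hs₂ir₂ r₂ le_rfl
        have gX : Mv i p (e₂, s₂) (r₂, s₂) :=
          Or.inl ⟨rfl, hs₂, r₂, he₂, le_rfl, hr₂, h₂⟩
        have gZ : Mv i p (s₂, e₂) (s₂, r₂) :=
          Or.inr ⟨rfl, hs₂, r₂, he₂, le_rfl, hr₂, h₂⟩
        rcases hor1 with h1 | h1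
        · rcases hor2 with h2 | h2
          · exact Or.inl (rch_mdzz hanti hinv hr₂ hs₂ _
              ((((Relation.ReflTransGen.single pre).trans h1).trans
                (rch_swap h2)).tail gX))
          · exact Or.inr (rch_mdzz hanti hinv hs₂ hr₂ _
              ((((Relation.ReflTransGen.single pre).trans h1).trans
                (rch_swap h2)).tail gZ))
        · rcases hor2 with h2 | h2
          · exact Or.inr (rch_mdzz hanti hinv hs₂ hr₂ _
              ((((Relation.ReflTransGen.single pre).trans h1).trans h2).tail gZ))
          · exact Or.inl (rch_mdzz hanti hinv hr₂ hs₂ _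
              ((((Relation.ReflTransGen.single pre).trans h1).trans h2).tail gX))
end

section
/- Let H be a Hilbert space, let C be an index set with maps Λ ↦ Λ⁺ᵗ, Λ ↦ Λ⁺ˢ, Λ ↦ Λᶜ and suppose for all Λ ∈ C: (i) (Λ⁺ᵗ)ᶜ)⁺ᵗ = Λᶜ, and enlargements compose additively ((Λ⁺ᵃ)⁺ᵇ = Λ⁺⁽ᵃ⁺ᵇ⁾). Let A, B assign von Neumann subalgebras of B(H) to elements of C such that A satisfies bounded spread Haag duality with spread s (A_{Λ⁺ˢ}' ⊆ A_{Λᶜ} for all Λ) and A, B are t-intertwined (A_Λ ⊆ B_{Λ⁺ᵗ} and B_Λ ⊆ A_{Λ⁺ᵗ} for all Λ). Then B satisfies bounded spread Haag duality with spread s + 2t: B_{Λ⁺⁽ˢ⁺²ᵗ⁾}' ⊆ B_{Λᶜ} for all Λ ∈ C. -/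
lemma commutant_anti {H : Type*} [NormedAddCommGroup H] [InnerProductSpace ℂ H]
    [CompleteSpace H] {M N : VonNeumannAlgebra H}
    (h : (M : Set (H →L[ℂ] H)) ⊆ N) :
    (N.commutant : Set (H →L[ℂ] H)) ⊆ M.commutant := by
  intro z hz
  rw [SetLike.mem_coe, VonNeumannAlgebra.mem_commutant_iff] at *
  exact fun g hg => hz g (h hg)

/-- Bounded spread Haag duality transfers across an intertwining of nets:
if `A` has duality spread `s` and `A, B` are `t`-intertwined, then `B` has
duality spread `s + 2t`. -/
theorem boundedSpreadHaagDuality_of_intertwined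
    {H : Type*} [NormedAddCommGroup H] [InnerProductSpace ℂ H] [CompleteSpace H]
    {C : Type*} (plus : C → ℝ → C) (compl : C → C)
    (s t : ℝ) (hs : 0 ≤ s) (ht : 0 ≤ t)
    (hcompl : ∀ Λ : C, plus (compl (plus Λ t)) t = compl Λ)
    (hadd : ∀ (Λ : C) (a b : ℝ), plus (plus Λ a) b = plus Λ (a + b))
    (A B : C → VonNeumannAlgebra H)
    (hdual : ∀ Λ : C, ((A (plus Λ s)).commutant : Set (H →L[ℂ] H)) ⊆ A (compl Λ))
    (hAB : ∀ Λ : C, (A Λ : Set (H →L[ℂ] H)) ⊆ B (plus Λ t))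
    (hBA : ∀ Λ : C, (B Λ : Set (H →L[ℂ] H)) ⊆ A (plus Λ t)) :
    ∀ Λ : C, ((B (plus Λ (s + 2 * t))).commutant : Set (H →L[ℂ] H)) ⊆ B (compl Λ) := by
  intro Λ x hx
  have h1 : (A (plus Λ (s + t)) : Set (H →L[ℂ] H)) ⊆ B (plus Λ (s + 2 * t)) := by
    have := hAB (plus Λ (s + t))
    rwa [hadd, show s + t + t = s + 2 * t by ring] at this
  have h2 : x ∈ ((A (plus (plus Λ t) s)).commutant : Set (H →L[ℂ] H)) := by
    rw [hadd]
    exact commutant_anti (by rw [add_comm]; exact h1) hx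
  have h3 : x ∈ (A (compl (plus Λ t)) : Set (H →L[ℂ] H)) := hdual _ h2
  have h4 := hAB (compl (plus Λ t)) h3
  rwa [hcompl] at h4
end
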